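/- arXiv:2209.06177 — 10 statements merged into one kernel-verified Lean document; each statement's English description precedes it below -/
import Mathlib

section
/- Let c be a class adjacency matrix on C classes with N > 0 and Q < N². Then S ≤ N and the adjusted homophily satisfies h_adj(c) ≤ 1, with equality h_adj(c) = 1 if and only if S = N (i.e., every edge connects two nodes of the same class). In particular, adjusted homophily satisfies the maximal agreement property with c_max = 1. -/
open Finset

/-- **Maximal agreement for adjusted homophily.**
For a class adjacency matrix `c` on `C` classes (symmetric, nonnegative) with
`N = ∑ᵢ aᵢ > 0` and `Q = ∑ᵢ aᵢ² < N²` (where `aᵢ = ∑ⱼ c i j` and `S = ∑ᵢ c i i`),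
we have `S ≤ N`, the adjusted homophily `h_adj = (N·S − Q)/(N² − Q)` satisfies
`h_adj ≤ 1`, and `h_adj = 1` iff `S = N`. -/
theorem adjusted_homophily_maximal_agreement
    (C : ℕ) (c : Fin C → Fin C → ℝ)
    (hsymm : ∀ i j, c i j = c j i)
    (hnonneg : ∀ i j, 0 ≤ c i j)
    (hN : 0 < ∑ i, ∑ j, c i j)
    (hQ : ∑ i, (∑ j, c i j) ^ 2 < (∑ i, ∑ j, c i j) ^ 2) :
    let a : Fin C → ℝ := fun i => ∑ j, c i j
    let N : ℝ := ∑ i, a i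
    let S : ℝ := ∑ i, c i i
    let Q : ℝ := ∑ i, (a i) ^ 2
    S ≤ N ∧
    (N * S - Q) / (N ^ 2 - Q) ≤ 1 ∧
    ((N * S - Q) / (N ^ 2 - Q) = 1 ↔ S = N) := by
  intro a N S Q
  have hSN : S ≤ N := by
    apply Finset.sum_le_sum
    intro i _
    exact Finset.single_le_sum (fun j _ => hnonneg i j) (Finset.mem_univ i)
  have hNpos : (0 : ℝ) < N := hN
  have hden : (0 : ℝ) < N ^ 2 - Q := by
    have : Q < N ^ 2 := hQ
    linarith
  have hnum : N * S - Q ≤ N ^ 2 - Q := by nlinarith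
  refine ⟨hSN, div_le_one_of_le₀ hnum hden.le, ?_⟩
  rw [div_eq_one_iff_eq hden.ne']
  constructor
  · intro h
    have : N * S = N * N := by nlinarith
    have := mul_left_cancel₀ hNpos.ne' this
    nlinarith
  · intro h; rw [h]; ring
end

section
/- Let c be a class adjacency matrix on C classes with S < N (the graph is not perfectly homophilous; note this forces Q < N²). Fix a class k and let c' be the matrix obtained from c by replacing c k k with c k k + 2 (adding one intra-class edge of class k). Then Q' < (N')² for the new matrix and h_adj(c') > h_adj(c); that is, adjusted homophily strictly increases when a diagonal element of the class adjacency matrix is incremented by two. -/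
open Finset

/-- **Monotonicity of adjusted homophily under diagonal increments.**
If `c` is a class adjacency matrix (symmetric, nonnegative) that is not perfectly
homophilous (`S < N`), then incrementing the diagonal entry `c k k` by `2`
(adding one intra-class edge of class `k`) keeps the denominator positive
(`Q' < N'²`) and strictly increases the adjusted homophily. -/
theorem adjusted_homophily_increases_on_diagonal_increment
    (C : ℕ) (c : Fin C → Fin C → ℝ) (k : Fin C)
    (hsymm : ∀ i j, c i j = c j i)
    (hnonneg : ∀ i j, 0 ≤ c i j)
    (hS : ∑ i, c i i < ∑ i, ∑ j, c i j) :
    let c' : Fin C → Fin C → ℝ := fun i j => if i = k ∧ j = k then c i j + 2 else c i j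
    let N : ℝ := ∑ i, ∑ j, c i j
    let S : ℝ := ∑ i, c i i
    let Q : ℝ := ∑ i, (∑ j, c i j) ^ 2
    let N' : ℝ := ∑ i, ∑ j, c' i j
    let S' : ℝ := ∑ i, c' i i
    let Q' : ℝ := ∑ i, (∑ j, c' i j) ^ 2
    Q' < N' ^ 2 ∧
    (N * S - Q) / (N ^ 2 - Q) < (N' * S' - Q') / (N' ^ 2 - Q') := by
  intro c' N S Q N' S' Q'
  set a : Fin C → ℝ := fun i => ∑ j, c i j with ha_def
  have ha_nonneg : ∀ i, 0 ≤ a i := fun i => Finset.sum_nonneg fun j _ => hnonneg i j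
  have haN : N = ∑ i, a i := rfl
  have hQa : Q = ∑ i, (a i) ^ 2 := rfl
  have hSN : S < N := hS
  have hak_le : ∀ i, a i ≤ N := fun i => by
    rw [haN]
    exact Finset.single_le_sum (fun j _ => ha_nonneg j) (Finset.mem_univ i)
  -- rows of c'
  have hc'row : ∀ i, ∑ j, c' i j = a i + (if i = k then (2:ℝ) else 0) := by
    intro i
    have h1 : ∀ j, c' i j = c i j + (if i = k ∧ j = k then (2:ℝ) else 0) := by
      intro j; simp only [c']; split_ifs <;> ring
    rw [Finset.sum_congr rfl fun j _ => h1 j, Finset.sum_add_distrib]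
    congr 1
    by_cases hi : i = k <;> simp [hi]
  have hN' : N' = N + 2 := by
    show (∑ i, ∑ j, c' i j) = N + 2
    rw [Finset.sum_congr rfl fun i _ => hc'row i, Finset.sum_add_distrib, ← haN]
    simp
  have hS' : S' = S + 2 := by
    show (∑ i, c' i i) = S + 2
    have h1 : ∀ i, c' i i = c i i + (if i = k then (2:ℝ) else 0) := by
      intro i; by_cases hi : i = k <;> simp [c', hi]
    rw [Finset.sum_congr rfl fun i _ => h1 i, Finset.sum_add_distrib]
    simp [S]
  have hQ' : Q' = Q + 4 * a k + 4 := by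
    show (∑ i, (∑ j, c' i j) ^ 2) = Q + 4 * a k + 4
    have h1 : ∀ i, (∑ j, c' i j) ^ 2 = (a i) ^ 2 + (if i = k then 4 * a i + 4 else 0) := by
      intro i; rw [hc'row i]; by_cases hi : i = k <;> simp [hi] <;> ring
    rw [Finset.sum_congr rfl fun i _ => h1 i, Finset.sum_add_distrib, ← hQa]
    simp
    ring
  -- there is a positive off-diagonal entry
  obtain ⟨p, q, hpq, hcpq⟩ : ∃ p q, p ≠ q ∧ 0 < c p q := by
    by_contra h
    push_neg at h
    have hzero : ∀ p q, p ≠ q → c p q = 0 := fun p q hne =>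
      le_antisymm (h p q hne) (hnonneg p q)
    have hdiag : ∀ i, a i = c i i := by
      intro i
      exact Finset.sum_eq_single i (fun j _ hj => hzero i j (Ne.symm hj)) (by simp)
    have : N = S := by
      rw [haN]; exact Finset.sum_congr rfl fun i _ => hdiag i
    linarith
  have hap : 0 < a p :=
    lt_of_lt_of_le hcpq (Finset.single_le_sum (fun j _ => hnonneg p j) (Finset.mem_univ q))
  have haq : 0 < a q := by
    have h1 : c q p = c p q := hsymm q p
    calc (0:ℝ) < c q p := by rw [h1]; exact hcpq
    _ ≤ a q := Finset.single_le_sum (fun j _ => hnonneg q j) (Finset.mem_univ p)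
  have hsum_pq : a p + a q ≤ N := by
    rw [haN]
    have h2 := Finset.sum_le_sum_of_subset_of_nonneg (Finset.subset_univ {p, q})
      (fun i _ _ => ha_nonneg i)
    rwa [Finset.sum_pair hpq] at h2
  -- denominator positive
  have hBform : N ^ 2 - Q = ∑ i, a i * (N - a i) := by
    have h3 : N ^ 2 = ∑ i, a i * N := by
      rw [haN, ← Finset.sum_mul, ← haN]; ring
    rw [h3, hQa, ← Finset.sum_sub_distrib]
    exact Finset.sum_congr rfl fun i _ => by ring
  have hB : 0 < N ^ 2 - Q := by
    rw [hBform]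
    have hle : a p * (N - a p) ≤ ∑ i, a i * (N - a i) :=
      Finset.single_le_sum (f := fun i => a i * (N - a i))
        (fun i _ => mul_nonneg (ha_nonneg i) (by linarith [hak_le i])) (Finset.mem_univ p)
    nlinarith [mul_pos hap haq]
  have hQk : a k ^ 2 ≤ Q := by
    rw [hQa]; exact Finset.single_le_sum (fun i _ => sq_nonneg (a i)) (Finset.mem_univ k)
  have hkey : 2 * N * a k < N ^ 2 + Q := by
    rcases lt_or_eq_of_le (hak_le k) with h | h
    · nlinarith [mul_pos (sub_pos.2 h) (sub_pos.2 h)]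
    · obtain ⟨r, hrk, har⟩ : ∃ r, r ≠ k ∧ 0 < a r := by
        by_cases hkp : p = k
        · exact ⟨q, fun e => hpq (hkp.trans e.symm), haq⟩
        · exact ⟨p, hkp, hap⟩
      have hkr : a k ^ 2 + a r ^ 2 ≤ Q := by
        rw [hQa]
        have h4 := Finset.sum_le_sum_of_subset_of_nonneg (Finset.subset_univ {k, r})
          (fun i _ _ => sq_nonneg (a i))
        rwa [Finset.sum_pair (Ne.symm hrk)] at h4
      nlinarith [mul_pos har har]
  have hB' : 0 < N' ^ 2 - Q' := by
    rw [hN', hQ']; nlinarith [hak_le k]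
  constructor
  · linarith
  · rw [div_lt_div_iff₀ hB hB', hN', hS', hQ']
    nlinarith [mul_pos (sub_pos.2 hSN) (sub_pos.2 hkey)]
end

section
/- Adjusted homophily does not satisfy the minimal agreement property: there exist perfectly heterophilous class adjacency matrices (all diagonal entries zero) with different values of h_adj. Concretely, for the 2-class matrix c with c 0 1 = c 1 0 = 1 and zero diagonal, h_adj(c) = −1, while for the 4-class matrix c' with c' 0 1 = c' 1 0 = c' 2 3 = c' 3 2 = 1 and all other entries zero, h_adj(c') = −1/3; both matrices have no intra-class edges, yet h_adj(c) ≠ h_adj(c'). -/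
open Finset

/-- **Adjusted homophily violates minimal agreement.**
The perfectly heterophilous 2-class matrix with `c 0 1 = c 1 0 = 1` has
`h_adj = −1`, while the perfectly heterophilous 4-class matrix with
`c' 0 1 = c' 1 0 = c' 2 3 = c' 3 2 = 1` has `h_adj = −1/3`; both have no
intra-class edges, yet their adjusted homophilies differ. -/
theorem adjusted_homophily_no_minimal_agreement :
    let c : Fin 2 → Fin 2 → ℝ := fun i j => if i ≠ j then 1 else 0
    let c' : Fin 4 → Fin 4 → ℝ := fun i j =>
      if (i = 0 ∧ j = 1) ∨ (i = 1 ∧ j = 0) ∨ (i = 2 ∧ j = 3) ∨ (i = 3 ∧ j = 2) then 1 else 0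
    let hadj2 : (Fin 2 → Fin 2 → ℝ) → ℝ := fun m =>
      ((∑ i, ∑ j, m i j) * (∑ i, m i i) - ∑ i, (∑ j, m i j) ^ 2) /
        ((∑ i, ∑ j, m i j) ^ 2 - ∑ i, (∑ j, m i j) ^ 2)
    let hadj4 : (Fin 4 → Fin 4 → ℝ) → ℝ := fun m =>
      ((∑ i, ∑ j, m i j) * (∑ i, m i i) - ∑ i, (∑ j, m i j) ^ 2) /
        ((∑ i, ∑ j, m i j) ^ 2 - ∑ i, (∑ j, m i j) ^ 2)
    (∀ i, c i i = 0) ∧ (∀ i, c' i i = 0) ∧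
    hadj2 c = -1 ∧ hadj4 c' = -1 / 3 ∧ hadj2 c ≠ hadj4 c' := by
  intro c c' hadj2 hadj4
  refine ⟨fun i => by simp [c], fun i => by fin_cases i <;> simp [c'], ?_, ?_, ?_⟩ <;>
    simp only [hadj2, hadj4, c, c', Fin.sum_univ_two, Fin.sum_univ_four] <;>
    norm_num [show ((0:Fin 4) ≠ 1 ∧ (0:Fin 4) ≠ 2 ∧ (0:Fin 4) ≠ 3 ∧ (1:Fin 4) ≠ 0 ∧ (1:Fin 4) ≠ 2 ∧ (1:Fin 4) ≠ 3 ∧ (2:Fin 4) ≠ 0 ∧ (2:Fin 4) ≠ 1 ∧ (2:Fin 4) ≠ 3 ∧ (3:Fin 4) ≠ 0 ∧ (3:Fin 4) ≠ 1 ∧ (3:Fin 4) ≠ 2) by decide]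
end

section
/- Let r ≥ 2 and consider the graph whose nodes are r red nodes forming a clique, together with, for each red node, r − 1 blue leaf nodes adjacent only to that red node (so there are n = r² nodes in total, each red node has degree 2(r − 1), and each blue node has degree 1). With C = 2 classes (red and blue), the class homophily of this graph equals h_class = 1/2 − 1/r. In particular, h_class → 1/2 as r → ∞ even though no blue node has any same-class neighbor, so this family witnesses that class homophily can be far from zero on non-homophilous graphs. -/
/-!
Every red node has `r - 1` red and `r - 1` blue neighbours, and every blue node a single red
one. So exactly half of the degree of the red class stays inside it, while red nodes make up the
fraction `r / r² = 1 / r` of all nodes: the red term is `1/2 - 1/r ≥ 0`. No two blue nodes are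
adjacent, so the blue term is `max (-nBlue / n) 0 = 0`.
-/

open Finset

/-- The node set of the clique-with-leaves graph: `r` red clique nodes
(`Sum.inl`) and, for each red node, `r − 1` blue leaves (`Sum.inr`). -/
def CliqueLeavesV (r : ℕ) := Fin r ⊕ Fin r × Fin (r - 1)

instance (r : ℕ) : Fintype (CliqueLeavesV r) := by unfold CliqueLeavesV; infer_instance
instance (r : ℕ) : DecidableEq (CliqueLeavesV r) := by unfold CliqueLeavesV; infer_instance

/-- Adjacency of the clique-with-leaves graph: red nodes form a clique, and the
blue leaf `(j, k)` is adjacent only to the red node `j`. -/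
def cliqueLeavesAdj (r : ℕ) : CliqueLeavesV r → CliqueLeavesV r → Prop
  | Sum.inl i, Sum.inl j => i ≠ j
  | Sum.inl i, Sum.inr p => i = p.1
  | Sum.inr p, Sum.inl i => i = p.1
  | Sum.inr _, Sum.inr _ => False

instance (r : ℕ) : DecidableRel (cliqueLeavesAdj r) := fun a b =>
  match a, b with
  | Sum.inl i, Sum.inl j => inferInstanceAs (Decidable (i ≠ j))
  | Sum.inl i, Sum.inr p => inferInstanceAs (Decidable (i = p.1))
  | Sum.inr p, Sum.inl i => inferInstanceAs (Decidable (i = p.1))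
  | Sum.inr _, Sum.inr _ => inferInstanceAs (Decidable False)

/-- A node is red iff it is a clique node. -/
def isRed {r : ℕ} : CliqueLeavesV r → Prop
  | Sum.inl _ => True
  | Sum.inr _ => False

instance (r : ℕ) : DecidablePred (@isRed r) := fun v =>
  match v with
  | Sum.inl _ => inferInstanceAs (Decidable True)
  | Sum.inr _ => inferInstanceAs (Decidable False)

theorem card_filter_fst_eq {α β : Type*} [Fintype α] [DecidableEq α] [Fintype β] (a : α) :
    #{q : α × β | a = q.1} = Fintype.card β := by
  rw [Finset.card_filter, Fintype.sum_prod_type]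
  simp [apply_ite Finset.card]

theorem card_filter_prod_and_left {α β : Type*} [Fintype α] [Fintype β] (R : α → β → Prop)
    [∀ a b, Decidable (R a b)] (P : α → Prop) [DecidablePred P] :
    #{p : α × β | R p.1 p.2 ∧ P p.1} = ∑ a ∈ univ.filter P, #{b | R a b} := by
  simp only [Finset.card_filter, Fintype.sum_prod_type, sum_filter, and_comm (b := P _), ite_and]
  exact sum_congr rfl fun a _ => by split_ifs <;> simp

theorem card_filter_prod_and_and {α β : Type*} [Fintype α] [Fintype β] (R : α → β → Prop)
    [∀ a b, Decidable (R a b)] (P : α → Prop) (Q : β → Prop) [DecidablePred P]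
    [DecidablePred Q] :
    #{p : α × β | R p.1 p.2 ∧ P p.1 ∧ Q p.2} = ∑ a ∈ univ.filter P, #{b | R a b ∧ Q b} := by
  rw [← card_filter_prod_and_left]
  exact congrArg card (filter_congr fun _ _ => by tauto)

namespace CliqueLeavesV

variable {r : ℕ}

/- `Sum.inl i` has type `Fin r ⊕ _`, not `CliqueLeavesV r`, so instance search cannot decide
predicates applied to it; these named constructors avoid that. -/
def red (i : Fin r) : CliqueLeavesV r := .inl i

def leaf (q : Fin r × Fin (r - 1)) : CliqueLeavesV r := .inr q

theorem forall_iff {P : CliqueLeavesV r → Prop} :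
    (∀ v, P v) ↔ (∀ i, P (red i)) ∧ ∀ q, P (leaf q) :=
  Sum.forall

@[simp] theorem isRed_red (i : Fin r) : isRed (red i) := trivial

@[simp] theorem not_isRed_leaf (q : Fin r × Fin (r - 1)) : ¬ isRed (leaf q) := id

@[simp] theorem adj_red_red (i j : Fin r) : cliqueLeavesAdj r (red i) (red j) ↔ i ≠ j := .rfl

@[simp] theorem adj_red_leaf (i : Fin r) (q : Fin r × Fin (r - 1)) :
    cliqueLeavesAdj r (red i) (leaf q) ↔ i = q.1 := .rfl

@[simp] theorem adj_leaf_red (q : Fin r × Fin (r - 1)) (i : Fin r) :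
    cliqueLeavesAdj r (leaf q) (red i) ↔ i = q.1 := .rfl

@[simp] theorem not_adj_leaf_leaf (q q' : Fin r × Fin (r - 1)) :
    ¬ cliqueLeavesAdj r (leaf q) (leaf q') := id

theorem card_eq (r : ℕ) : Fintype.card (CliqueLeavesV r) = r ^ 2 := by
  show Fintype.card (Fin r ⊕ Fin r × Fin (r - 1)) = _
  cases r <;> simp [sq, Nat.mul_succ, add_comm]

theorem card_filter_eq_add (p : CliqueLeavesV r → Prop) [DecidablePred p] :
    #{v | p v} = #{i | p (red i)} + #{q | p (leaf q)} := by
  simp only [Finset.card_filter]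
  exact Fintype.sum_sum_type _

theorem card_filter_isRed (r : ℕ) : #{v : CliqueLeavesV r | isRed v} = r := by
  simp [card_filter_eq_add]

theorem card_filter_adj_of_isRed :
    ∀ v : CliqueLeavesV r, isRed v → #{u | cliqueLeavesAdj r v u} = 2 * (r - 1) :=
  forall_iff.2 ⟨fun i _ => by simp [card_filter_eq_add, filter_ne, card_filter_fst_eq, two_mul],
    fun q h => absurd h (not_isRed_leaf q)⟩

theorem card_filter_adj_of_not_isRed :
    ∀ v : CliqueLeavesV r, ¬ isRed v → #{u | cliqueLeavesAdj r v u} = 1 :=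
  forall_iff.2 ⟨fun i h => absurd (isRed_red i) h,
    fun q _ => by simp [card_filter_eq_add, filter_eq']⟩

theorem card_filter_adj_and_isRed_of_isRed :
    ∀ v : CliqueLeavesV r, isRed v → #{u | cliqueLeavesAdj r v u ∧ isRed u} = r - 1 :=
  forall_iff.2 ⟨fun i _ => by simp [card_filter_eq_add, filter_ne],
    fun q h => absurd h (not_isRed_leaf q)⟩

theorem card_filter_adj_and_not_isRed_of_not_isRed :
    ∀ v : CliqueLeavesV r, ¬ isRed v → #{u | cliqueLeavesAdj r v u ∧ ¬ isRed u} = 0 :=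
  forall_iff.2 ⟨fun i h => absurd (isRed_red i) h,
    fun q _ => by simp [card_filter_eq_add]⟩

theorem card_filter_adj_isRed (r : ℕ) :
    #{p : CliqueLeavesV r × CliqueLeavesV r | cliqueLeavesAdj r p.1 p.2 ∧ isRed p.1} =
      r * (2 * (r - 1)) := by
  rw [card_filter_prod_and_left, sum_const_nat fun v hv =>
    card_filter_adj_of_isRed v (mem_filter.1 hv).2, card_filter_isRed]

theorem card_filter_adj_isRed_isRed (r : ℕ) :
    #{p : CliqueLeavesV r × CliqueLeavesV r |
      cliqueLeavesAdj r p.1 p.2 ∧ isRed p.1 ∧ isRed p.2} = r * (r - 1) := by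
  rw [card_filter_prod_and_and, sum_const_nat fun v hv =>
    card_filter_adj_and_isRed_of_isRed v (mem_filter.1 hv).2, card_filter_isRed]

theorem card_filter_adj_not_isRed_not_isRed (r : ℕ) :
    #{p : CliqueLeavesV r × CliqueLeavesV r |
      cliqueLeavesAdj r p.1 p.2 ∧ ¬ isRed p.1 ∧ ¬ isRed p.2} = 0 := by
  rw [card_filter_prod_and_and _ (fun v => ¬ isRed v) (fun v => ¬ isRed v)]
  exact sum_eq_zero fun v hv => card_filter_adj_and_not_isRed_of_not_isRed v (mem_filter.1 hv).2

end CliqueLeavesV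

/-- **Class homophily is far from zero on a non-homophilous graph.**
For the clique-with-leaves graph with `r ≥ 2`: there are `n = r²` nodes, each
red node has degree `2(r − 1)`, each blue node has degree `1`, and the class
homophily (with `C = 2` classes) equals `1/2 − 1/r`. -/
theorem class_homophily_of_clique_with_leaves (r : ℕ) (hr : 2 ≤ r) :
    let n : ℝ := Fintype.card (CliqueLeavesV r)
    let nRed : ℝ := (univ.filter (fun v : CliqueLeavesV r => isRed v)).card
    let nBlue : ℝ := (univ.filter (fun v : CliqueLeavesV r => ¬ isRed v)).card
    let ERed : ℝ := (univ.filter (fun p : CliqueLeavesV r × CliqueLeavesV r =>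
      cliqueLeavesAdj r p.1 p.2 ∧ isRed p.1 ∧ isRed p.2)).card
    let EBlue : ℝ := (univ.filter (fun p : CliqueLeavesV r × CliqueLeavesV r =>
      cliqueLeavesAdj r p.1 p.2 ∧ ¬ isRed p.1 ∧ ¬ isRed p.2)).card
    let DRed : ℝ := (univ.filter (fun p : CliqueLeavesV r × CliqueLeavesV r =>
      cliqueLeavesAdj r p.1 p.2 ∧ isRed p.1)).card
    let DBlue : ℝ := (univ.filter (fun p : CliqueLeavesV r × CliqueLeavesV r =>
      cliqueLeavesAdj r p.1 p.2 ∧ ¬ isRed p.1)).card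
    Fintype.card (CliqueLeavesV r) = r ^ 2 ∧
    (∀ v : CliqueLeavesV r, isRed v →
      (univ.filter (fun u => cliqueLeavesAdj r v u)).card = 2 * (r - 1)) ∧
    (∀ v : CliqueLeavesV r, ¬ isRed v →
      (univ.filter (fun u => cliqueLeavesAdj r v u)).card = 1) ∧
    (1 / ((2 : ℝ) - 1)) *
      (max (ERed / DRed - nRed / n) 0 + max (EBlue / DBlue - nBlue / n) 0)
      = 1 / 2 - 1 / (r : ℝ) := by
  intro n nRed nBlue ERed EBlue DRed DBlue
  refine ⟨CliqueLeavesV.card_eq r, CliqueLeavesV.card_filter_adj_of_isRed,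
    CliqueLeavesV.card_filter_adj_of_not_isRed, ?_⟩
  have hr' : (2 : ℝ) ≤ r := by exact_mod_cast hr
  have h_blue : max (EBlue / DBlue - nBlue / n) 0 = 0 := by
    refine max_eq_right ?_
    simp only [EBlue, CliqueLeavesV.card_filter_adj_not_isRed_not_isRed, Nat.cast_zero,
      zero_div, zero_sub, neg_nonpos]
    positivity
  have h_red : ERed / DRed - nRed / n = 1 / 2 - 1 / r := by
    simp only [ERed, DRed, nRed, n, CliqueLeavesV.card_filter_adj_isRed_isRed,
      CliqueLeavesV.card_filter_adj_isRed, CliqueLeavesV.card_filter_isRed,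
      CliqueLeavesV.card_eq]
    push_cast [Nat.cast_sub (by omega : 1 ≤ r)]
    have : (r : ℝ) - 1 ≠ 0 := by linarith
    field_simp
  have h_inv : 1 / (r : ℝ) ≤ 1 / 2 := one_div_le_one_div_of_le two_pos hr'
  rw [h_blue, h_red, max_eq_left (by linarith)]
  norm_num
end

section
/- For a symmetric confusion matrix, Cohen's Kappa and the multiclass Matthews correlation coefficient coincide and both equal the adjusted homophily: let c : Fin C → Fin C → ℝ be symmetric with nonnegative entries, row sums a i = Σ_j c i j (equal to the column sums, by symmetry), N = Σ_i a i > 0, S = Σ_i c i i, and Q = Σ_i (a i)² with Q < N². Then Cohen's Kappa κ = (S/N − Q/N²)/(1 − Q/N²), the multiclass Matthews correlation coefficient MCC = (N·S − Q)/(√(N² − Q)·√(N² − Q)), and h_adj = (N·S − Q)/(N² − Q) are all equal. -/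
open Finset

/-- **Cohen's Kappa and the multiclass Matthews correlation coefficient both
coincide with adjusted homophily on symmetric confusion matrices.**
With `a i = ∑ⱼ c i j`, `N = ∑ᵢ a i > 0`, `S = ∑ᵢ c i i`, `Q = ∑ᵢ (a i)² < N²`:
`κ = (S/N − Q/N²)/(1 − Q/N²)`, `MCC = (N·S − Q)/(√(N²−Q)·√(N²−Q))` and
`h_adj = (N·S − Q)/(N² − Q)` are all equal. -/
theorem kappa_eq_mcc_eq_adjusted_homophily
    (C : ℕ) (c : Fin C → Fin C → ℝ)
    (hsymm : ∀ i j, c i j = c j i)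
    (hnonneg : ∀ i j, 0 ≤ c i j)
    (hN : 0 < ∑ i, ∑ j, c i j)
    (hQ : ∑ i, (∑ j, c i j) ^ 2 < (∑ i, ∑ j, c i j) ^ 2) :
    let N : ℝ := ∑ i, ∑ j, c i j
    let S : ℝ := ∑ i, c i i
    let Q : ℝ := ∑ i, (∑ j, c i j) ^ 2
    (S / N - Q / N ^ 2) / (1 - Q / N ^ 2) = (N * S - Q) / (N ^ 2 - Q) ∧
    (N * S - Q) / (Real.sqrt (N ^ 2 - Q) * Real.sqrt (N ^ 2 - Q))
      = (N * S - Q) / (N ^ 2 - Q) := by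
  intro N S Q
  have hNne : (N : ℝ) ≠ 0 := ne_of_gt hN
  have hQlt : Q < N ^ 2 := hQ
  have hpos : 0 < N ^ 2 - Q := by linarith
  constructor
  · have hd : (0:ℝ) < 1 - Q / N ^ 2 := by
      have : Q / N ^ 2 < 1 := (div_lt_one (by positivity)).2 hQlt
      linarith
    rw [div_eq_div_iff (ne_of_gt hd) (ne_of_gt hpos)]
    field_simp
  · rw [Real.mul_self_sqrt (le_of_lt hpos)]
end

section
/- If the label of one endpoint allows unique reconstruction of the label of the other endpoint, then label informativeness equals 1: let p be a symmetric probability distribution on Fin C × Fin C with marginal p̄ and H(p̄) > 0, and suppose there exists a function f : Fin C → Fin C such that p k l ≠ 0 implies k = f l. Then LI(p) = 1. -/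
open Finset

/-- **Label informativeness equals 1 under unique reconstruction.**
If `p` is a symmetric probability distribution on `Fin C × Fin C` with positive
marginal entropy, and there is `f : Fin C → Fin C` such that `p k l ≠ 0 → k = f l`
(the neighbor's label uniquely determines the node's label), then `LI(p) = 1`. -/
theorem label_informativeness_eq_one_of_unique_reconstruction
    (C : ℕ) (p : Fin C → Fin C → ℝ)
    (hnonneg : ∀ k l, 0 ≤ p k l)
    (hsum : ∑ k, ∑ l, p k l = 1)
    (hsymm : ∀ k l, p k l = p l k)
    (hH : 0 < -∑ k, (∑ l, p k l) * Real.log (∑ l, p k l))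
    (f : Fin C → Fin C)
    (hf : ∀ k l, p k l ≠ 0 → k = f l) :
    let pbar : Fin C → ℝ := fun k => ∑ l, p k l
    let H : ℝ := -∑ k, pbar k * Real.log (pbar k)
    (∑ k, ∑ l, p k l * Real.log (p k l / (pbar k * pbar l))) / H = 1 := by
  intro pbar H
  -- marginal at k equals p k (f k)
  have hbar : ∀ k, pbar k = p k (f k) := by
    intro k
    apply Finset.sum_eq_single
    · intro m _ hm
      by_contra h
      exact hm (hf m k (by rw [hsymm]; exact h))
    · intro h; exact absurd (Finset.mem_univ (f k)) h
  have key : ∀ k l, p k l ≠ 0 → p k l = pbar k ∧ p k l = pbar l := by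
    intro k l h0
    have hlk : p l k ≠ 0 := by rw [← hsymm]; exact h0
    have h1 : l = f k := hf l k hlk
    have h2 : k = f l := hf k l h0
    constructor
    · rw [hbar k, ← h1]
    · rw [hbar l, ← h2, hsymm]
  have term : ∀ k l, p k l * Real.log (p k l / (pbar k * pbar l))
      = -(p k l * Real.log (pbar k)) := by
    intro k l
    by_cases h0 : p k l = 0
    · simp [h0]
    · obtain ⟨h1, h2⟩ := key k l h0
      have hb : pbar k ≠ 0 := by rw [← h1]; exact h0
      have : p k l / (pbar k * pbar l) = (pbar k)⁻¹ := by
        rw [← h1, ← h2]; field_simp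
      rw [this, Real.log_inv]; ring
  have hnum : (∑ k, ∑ l, p k l * Real.log (p k l / (pbar k * pbar l))) = H := by
    simp only [term]
    have : ∀ k, ∑ l, -(p k l * Real.log (pbar k))
        = -(pbar k * Real.log (pbar k)) := by
      intro k
      simp only [← neg_mul]
      rw [← Finset.sum_mul, Finset.sum_neg_distrib]
    rw [Finset.sum_congr rfl (fun k _ => this k)]
    simp [H]
  rw [hnum]
  exact div_self (ne_of_gt hH)
end

section
/- Label informativeness is small for near-independent edge distributions: let p be a symmetric probability distribution on Fin C × Fin C with marginal p̄ and H(p̄) > 0, and let ε ≥ 0 be such that |p k l − p̄ k · p̄ l| ≤ ε · p̄ k · p̄ l for all k, l. Then 0 ≤ LI(p) ≤ log(1 + ε)/H(p̄). (This is the deterministic core of the proposition that LI has asymptotic constant baseline 0 under the configuration model, where with high probability every p k l is within a factor 1 ± ε of p̄ k · p̄ l with ε = o(1).) -/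
open Finset

/-! The numerator of `LI(p)` is the relative entropy of `p` with respect to `p̄ ⊗ p̄`. Gibbs'
inequality `a - b ≤ a log (a / b)`, summed over both probability vectors, makes it nonnegative,
while `p k l ≤ (1 + ε) p̄ k p̄ l` bounds each logarithm by `log (1 + ε)`, so it is at most
`log (1 + ε) · ∑ p k l = log (1 + ε)`. Dividing by `H(p̄) > 0` gives both bounds. -/

namespace Real

theorem sub_le_mul_log_div {a b : ℝ} (ha : 0 ≤ a) (hb : 0 ≤ b) (hab : 0 < a → 0 < b) :
    a - b ≤ a * log (a / b) := by
  rcases ha.eq_or_lt with rfl | ha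
  · simpa using hb
  have hb := hab ha
  calc a - b = a * (1 - (a / b)⁻¹) := by field_simp
    _ ≤ a * log (a / b) :=
      mul_le_mul_of_nonneg_left (one_sub_inv_le_log_of_pos (div_pos ha hb)) ha.le

theorem mul_log_div_le_mul_log {a b c : ℝ} (ha : 0 ≤ a) (hab : 0 < a → 0 < b)
    (h : a ≤ c * b) : a * log (a / b) ≤ a * log c := by
  rcases ha.eq_or_lt with rfl | ha
  · simp
  have hb := hab ha
  exact mul_le_mul_of_nonneg_left
    (log_le_log (div_pos ha hb) ((div_le_iff₀ hb).2 h)) ha.le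

section RelativeEntropy

variable {ι : Type*} [Fintype ι] {f g : ι → ℝ}

theorem sum_sub_sum_le_sum_mul_log_div (hf : ∀ i, 0 ≤ f i) (hg : ∀ i, 0 ≤ g i)
    (hfg : ∀ i, 0 < f i → 0 < g i) :
    ∑ i, f i - ∑ i, g i ≤ ∑ i, f i * log (f i / g i) := by
  rw [← sum_sub_distrib]
  exact sum_le_sum fun i _ => sub_le_mul_log_div (hf i) (hg i) (hfg i)

theorem sum_mul_log_div_le {c : ℝ} (hf : ∀ i, 0 ≤ f i) (hfg : ∀ i, 0 < f i → 0 < g i)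
    (h : ∀ i, f i ≤ c * g i) :
    ∑ i, f i * log (f i / g i) ≤ (∑ i, f i) * log c := by
  rw [sum_mul]
  exact sum_le_sum fun i _ => mul_log_div_le_mul_log (hf i) (hfg i) (h i)

end RelativeEntropy

end Real

theorem pos_of_abs_sub_le_mul {a b ε : ℝ} (hb : 0 ≤ b) (h : |a - b| ≤ ε * b) (ha : 0 < a) :
    0 < b := by
  refine hb.lt_of_ne ?_
  rintro rfl
  simp only [sub_zero, mul_zero, abs_nonpos_iff] at h
  exact ha.ne' h

theorem label_informativeness_small_of_near_independent_general
    (C : ℕ) (p : Fin C → Fin C → ℝ)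
    (hnonneg : ∀ k l, 0 ≤ p k l)
    (hsum : ∑ k, ∑ l, p k l = 1)
    (hH : 0 < -∑ k, (∑ l, p k l) * Real.log (∑ l, p k l))
    (ε : ℝ)
    (hclose : ∀ k l, |p k l - (∑ l', p k l') * (∑ l', p l l')| ≤
      ε * ((∑ l', p k l') * (∑ l', p l l'))) :
    let pbar : Fin C → ℝ := fun k => ∑ l, p k l
    let H : ℝ := -∑ k, pbar k * Real.log (pbar k)
    let LI : ℝ := (∑ k, ∑ l, p k l * Real.log (p k l / (pbar k * pbar l))) / H
    0 ≤ LI ∧ LI ≤ Real.log (1 + ε) / H := by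
  intro pbar H LI
  have hpbar_sum : ∑ k, pbar k = 1 := hsum
  have hq : ∀ k l, 0 ≤ pbar k * pbar l := fun k l =>
    mul_nonneg (sum_nonneg fun l _ => hnonneg k l) (sum_nonneg fun l' _ => hnonneg l l')
  have hsupp : ∀ k l, 0 < p k l → 0 < pbar k * pbar l := fun k l =>
    pos_of_abs_sub_le_mul (hq k l) (hclose k l)
  have hlower := Real.sum_sub_sum_le_sum_mul_log_div (f := fun x : Fin C × Fin C => p x.1 x.2)
    (g := fun x => pbar x.1 * pbar x.2) (fun x => hnonneg _ _) (fun x => hq _ _)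
    (fun x => hsupp _ _)
  have hupper := Real.sum_mul_log_div_le (f := fun x : Fin C × Fin C => p x.1 x.2)
    (g := fun x => pbar x.1 * pbar x.2) (c := 1 + ε) (fun x => hnonneg _ _)
    (fun x => hsupp _ _) fun x => by linarith [(abs_le.1 (hclose x.1 x.2)).2]
  simp only [Fintype.sum_prod_type] at hlower hupper
  rw [← sum_mul_sum, hpbar_sum] at hlower
  rw [hsum, one_mul] at hupper
  exact ⟨div_nonneg (by linarith) hH.le, div_le_div_of_nonneg_right hupper hH.le⟩

/-- **Deterministic core of the asymptotic constant baseline of LI.**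
If every joint probability `p k l` is within a factor `1 ± ε` of the product of
marginals, i.e. `|p k l − p̄ k·p̄ l| ≤ ε·p̄ k·p̄ l`, then
`0 ≤ LI(p) ≤ log(1 + ε)/H(p̄)`. -/
theorem label_informativeness_small_of_near_independent
    (C : ℕ) (p : Fin C → Fin C → ℝ)
    (hnonneg : ∀ k l, 0 ≤ p k l)
    (hsum : ∑ k, ∑ l, p k l = 1)
    (hsymm : ∀ k l, p k l = p l k)
    (hH : 0 < -∑ k, (∑ l, p k l) * Real.log (∑ l, p k l))
    (ε : ℝ) (hε : 0 ≤ ε)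
    (hclose : ∀ k l, |p k l - (∑ l', p k l') * (∑ l', p l l')| ≤
      ε * ((∑ l', p k l') * (∑ l', p l l'))) :
    let pbar : Fin C → ℝ := fun k => ∑ l, p k l
    let H : ℝ := -∑ k, pbar k * Real.log (pbar k)
    let LI : ℝ := (∑ k, ∑ l, p k l * Real.log (p k l / (pbar k * pbar l))) / H
    0 ≤ LI ∧ LI ≤ Real.log (1 + ε) / H :=
  label_informativeness_small_of_near_independent_general C p hnonneg hsum hH ε hclose
end

section
/- For the four-class SBM edge distribution, the limiting dataset characteristics are h_adj = (4/3)·p₀ − 1/3 and LI = 1 − H(p₀, p₁, p₂, p₂)/log 4. Precisely: let p₀, p₁, p₂ ≥ 0 with p₀ + p₁ + 2·p₂ = 1, and let p be the distribution on Fin 4 × Fin 4 given by p k k = p₀/4 for all k, p k (3 − k) = p₁/4 for all k (pairing class k with its complementary class 3 − k), and p k l = p₂/4 for the remaining two values of l. Then the marginal is uniform, p̄ k = 1/4; the adjusted homophily h_adj = (Σ_k p k k − Σ_k (p̄ k)²)/(1 − Σ_k (p̄ k)²) equals (4·p₀ − 1)/3; and the label informativeness LI(p) equals 1 − H/log 4,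 where H = −(p₀·log p₀ + p₁·log p₁ + 2·p₂·log p₂) with the convention 0·log 0 = 0. -/
open Finset Real

/-!
Every row of the four-class distribution is a rearrangement of `(p₀, p₁, p₂, p₂)/4`, so the
marginal is uniform. For a uniform marginal `1/C`, the adjusted homophily is an affine function
of the diagonal mass, the marginal entropy is `log C`, and the mutual information is
`2 log C` minus the joint entropy. Here the joint entropy is `H + log 4`: spreading the
distribution `(p₀, p₁, p₂, p₂)` uniformly over four rows adds `log 4` to its entropy.
-/

section EdgeDistribution

variable {ι : Type*} [Fintype ι]

noncomputable section

def marginal (p : ι → ι → ℝ) (k : ι) : ℝ := ∑ l, p k l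

def adjustedHomophily (p : ι → ι → ℝ) : ℝ :=
  ((∑ k, p k k) - ∑ k, marginal p k ^ 2) / (1 - ∑ k, marginal p k ^ 2)

/-- Mathlib's `log 0 = 0` realizes the convention `0 · log 0 = 0`. -/
def labelInformativeness (p : ι → ι → ℝ) : ℝ :=
  (∑ k, ∑ l, p k l * log (p k l / (marginal p k * marginal p l))) /
    (-∑ k, marginal p k * log (marginal p k))

def jointEntropy (p : ι → ι → ℝ) : ℝ := ∑ k, ∑ l, negMulLog (p k l)

end

lemma mul_log_div_eq_sub (x : ℝ) {c : ℝ} (hc : c ≠ 0) :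
    x * log (x / c) = x * log x - x * log c := by
  rcases eq_or_ne x 0 with rfl | hx
  · simp
  · rw [log_div hx hc]; ring

variable [Nonempty ι] {p : ι → ι → ℝ}

lemma adjustedHomophily_of_marginal_eq_inv_card
    (hp : ∀ k, marginal p k = (Fintype.card ι : ℝ)⁻¹) :
    adjustedHomophily p = (Fintype.card ι * ∑ k, p k k - 1) / (Fintype.card ι - 1) := by
  have hn : (Fintype.card ι : ℝ) ≠ 0 := by positivity
  simp only [adjustedHomophily, hp, sum_const, card_univ, nsmul_eq_mul]
  rw [← mul_div_mul_left _ _ hn]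
  congr 1 <;> field_simp

lemma sum_sum_eq_one_of_marginal_eq_inv_card
    (hp : ∀ k, marginal p k = (Fintype.card ι : ℝ)⁻¹) :
    ∑ k, ∑ l, p k l = 1 := by
  have hn : (Fintype.card ι : ℝ) ≠ 0 := by positivity
  change ∑ k, marginal p k = 1
  simp only [hp, sum_const, card_univ, nsmul_eq_mul, mul_inv_cancel₀ hn]

lemma labelInformativeness_of_marginal_eq_inv_card
    (hp : ∀ k, marginal p k = (Fintype.card ι : ℝ)⁻¹) :
    labelInformativeness p =
      (2 * log (Fintype.card ι) - jointEntropy p) / log (Fintype.card ι) := by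
  set n : ℝ := (Fintype.card ι : ℝ) with hn_def
  have hn : n ≠ 0 := by positivity
  have hentry : ∀ x : ℝ, x * log (x / (n⁻¹ * n⁻¹)) = 2 * log n * x - negMulLog x := by
    intro x
    rw [mul_log_div_eq_sub x (by positivity), log_mul (by positivity) (by positivity), log_inv,
      negMulLog]
    ring
  have hmass := sum_sum_eq_one_of_marginal_eq_inv_card hp
  simp only [labelInformativeness, jointEntropy, hp, hentry, sum_sub_distrib, ← mul_sum, hmass,
    sum_const, card_univ, nsmul_eq_mul, log_inv, ← hn_def]
  congr 1
  · ring
  · field_simp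

end EdgeDistribution

section FourClassSBM

variable (p₀ p₁ p₂ : ℝ)

/-- Class `3 - k` is the complementary class of `k`. -/
noncomputable def sbmEdgeDist : Fin 4 → Fin 4 → ℝ := fun k l =>
  if l = k then p₀ / 4 else if l = 3 - k then p₁ / 4 else p₂ / 4

lemma sum_sbmEdgeDist_row (f : ℝ → ℝ) (k : Fin 4) :
    ∑ l, f (sbmEdgeDist p₀ p₁ p₂ k l) = f (p₀ / 4) + f (p₁ / 4) + 2 * f (p₂ / 4) := by
  fin_cases k <;> simp [sbmEdgeDist, Fin.sum_univ_four] <;> ring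

lemma marginal_sbmEdgeDist (k : Fin 4) :
    marginal (sbmEdgeDist p₀ p₁ p₂) k = (p₀ + p₁ + 2 * p₂) / 4 := by
  have hrow := sum_sbmEdgeDist_row p₀ p₁ p₂ id k
  simp only [id] at hrow
  rw [marginal, hrow]
  ring

lemma sum_sbmEdgeDist_diag : ∑ k, sbmEdgeDist p₀ p₁ p₂ k k = p₀ := by
  simp only [sbmEdgeDist, ↓reduceIte, sum_const, card_univ, Fintype.card_fin, nsmul_eq_mul]
  ring

lemma jointEntropy_sbmEdgeDist (hsum : p₀ + p₁ + 2 * p₂ = 1) :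
    jointEntropy (sbmEdgeDist p₀ p₁ p₂) =
      negMulLog p₀ + negMulLog p₁ + 2 * negMulLog p₂ + log 4 := by
  have hquarter : ∀ x : ℝ, negMulLog (x / 4) = (negMulLog x + x * log 4) / 4 := by
    intro x
    rw [div_eq_mul_inv, negMulLog_mul]
    simp only [negMulLog, log_inv]
    ring
  simp only [jointEntropy, sum_sbmEdgeDist_row, hquarter, sum_const, card_univ, Fintype.card_fin,
    nsmul_eq_mul]
  linear_combination log 4 * hsum

end FourClassSBM

theorem sbm_four_class_characteristics_general
    (p₀ p₁ p₂ : ℝ)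
    (hsum : p₀ + p₁ + 2 * p₂ = 1) :
    let p : Fin 4 → Fin 4 → ℝ := fun k l =>
      if l = k then p₀ / 4 else if l = 3 - k then p₁ / 4 else p₂ / 4
    let pbar : Fin 4 → ℝ := fun k => ∑ l, p k l
    let H : ℝ := -(p₀ * Real.log p₀ + p₁ * Real.log p₁ + 2 * (p₂ * Real.log p₂))
    (∀ k, pbar k = 1 / 4) ∧
    ((∑ k, p k k) - ∑ k, (pbar k) ^ 2) / (1 - ∑ k, (pbar k) ^ 2)
      = (4 * p₀ - 1) / 3 ∧
    (∑ k, ∑ l, p k l * Real.log (p k l / (pbar k * pbar l))) /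
        (-∑ k, pbar k * Real.log (pbar k))
      = 1 - H / Real.log 4 := by
  intro _ _ H
  have huniform : ∀ k, marginal (sbmEdgeDist p₀ p₁ p₂) k = (Fintype.card (Fin 4) : ℝ)⁻¹ := by
    simp [marginal_sbmEdgeDist, hsum]
  have hH : H = negMulLog p₀ + negMulLog p₁ + 2 * negMulLog p₂ := by
    simp only [H, negMulLog]
    ring
  refine ⟨fun k => (huniform k).trans (by norm_num), ?_, ?_⟩
  · change adjustedHomophily (sbmEdgeDist p₀ p₁ p₂) = _
    rw [adjustedHomophily_of_marginal_eq_inv_card huniform, sum_sbmEdgeDist_diag]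
    norm_num
  · change labelInformativeness (sbmEdgeDist p₀ p₁ p₂) = _
    have hlog4 : log 4 ≠ 0 := (log_pos (by norm_num)).ne'
    rw [labelInformativeness_of_marginal_eq_inv_card huniform, Fintype.card_fin, Nat.cast_ofNat,
      jointEntropy_sbmEdgeDist p₀ p₁ p₂ hsum, hH]
    field_simp
    ring

/-- **Characteristics of the four-class SBM edge distribution.**
For `p₀, p₁, p₂ ≥ 0` with `p₀ + p₁ + 2p₂ = 1`, the edge distribution on
`Fin 4 × Fin 4` with `p k k = p₀/4`, `p k (3−k) = p₁/4` and `p k l = p₂/4`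
otherwise has uniform marginal `p̄ k = 1/4`, adjusted homophily
`(4p₀ − 1)/3 = (4/3)p₀ − 1/3`, and label informativeness
`1 − H(p₀,p₁,p₂,p₂)/log 4`. -/
theorem sbm_four_class_characteristics
    (p₀ p₁ p₂ : ℝ) (h0 : 0 ≤ p₀) (h1 : 0 ≤ p₁) (h2 : 0 ≤ p₂)
    (hsum : p₀ + p₁ + 2 * p₂ = 1) :
    let p : Fin 4 → Fin 4 → ℝ := fun k l =>
      if l = k then p₀ / 4 else if l = 3 - k then p₁ / 4 else p₂ / 4
    let pbar : Fin 4 → ℝ := fun k => ∑ l, p k l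
    let H : ℝ := -(p₀ * Real.log p₀ + p₁ * Real.log p₁ + 2 * (p₂ * Real.log p₂))
    (∀ k, pbar k = 1 / 4) ∧
    ((∑ k, p k k) - ∑ k, (pbar k) ^ 2) / (1 - ∑ k, (pbar k) ^ 2)
      = (4 * p₀ - 1) / 3 ∧
    (∑ k, ∑ l, p k l * Real.log (p k l / (pbar k * pbar l))) /
        (-∑ k, pbar k * Real.log (pbar k))
      = 1 - H / Real.log 4 :=
  sbm_four_class_characteristics_general p₀ p₁ p₂ hsum
end

section
/- Class homophily violates constant baseline under degree imbalance: consider C = 2 classes with equal node counts n₁ = n₂ > 0, class degree masses a₁ > 0 and a₂ = l·a₁ for a real l ≥ 1, and the product (independence) class adjacency matrix c i j = a i · a j / N with N = a₁ + a₂. Then the class homophily equals h_class = max(1/(l + 1) − 1/2, 0) + max(l/(l + 1) − 1/2, 0) = l/(l + 1) − 1/2. In particular, h_class tends to 1/2 as l → ∞ even though edges are placed independently of the labels. -/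
open Finset

/-- **Class homophily violates constant baseline under degree imbalance.**
For two classes of equal size, degree masses `a₁ > 0` and `a₂ = l·a₁` (`l ≥ 1`),
and the product (independence) class adjacency matrix `c i j = aᵢ·aⱼ/N`,
the class homophily equals
`max(1/(l+1) − 1/2, 0) + max(l/(l+1) − 1/2, 0) = l/(l+1) − 1/2`,
which tends to `1/2` as `l → ∞` even though edges are label-independent. -/
theorem class_homophily_violates_constant_baseline
    (l : ℝ) (hl : 1 ≤ l)
    (n₁ n₂ : ℝ) (hn : n₁ = n₂) (hn₁ : 0 < n₁)
    (a : Fin 2 → ℝ) (ha₀ : 0 < a 0) (ha₁ : a 1 = l * a 0) :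
    let N : ℝ := a 0 + a 1
    let c : Fin 2 → Fin 2 → ℝ := fun i j => a i * a j / N
    let hclass : ℝ := (1 / ((2 : ℝ) - 1)) *
      (max (c 0 0 / a 0 - n₁ / (n₁ + n₂)) 0 + max (c 1 1 / a 1 - n₂ / (n₁ + n₂)) 0)
    hclass = max (1 / (l + 1) - 1 / 2) 0 + max (l / (l + 1) - 1 / 2) 0 ∧
    hclass = l / (l + 1) - 1 / 2 := by
  intro N c hclass
  have hl0 : (0:ℝ) < l + 1 := by linarith
  have hN : N = (l + 1) * a 0 := by simp only [N, ha₁]; ring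
  have hNne : N ≠ 0 := by rw [hN]; positivity
  have ha1pos : 0 < a 1 := by rw [ha₁]; positivity
  have hnn : n₁ / (n₁ + n₁) = 1 / 2 := by
    field_simp; ring
  have h00 : c 0 0 / a 0 = 1 / (l + 1) := by
    simp only [c, hN]
    field_simp
  have h11 : c 1 1 / a 1 = l / (l + 1) := by
    simp only [c, hN, ha₁]
    field_simp
  have hc : hclass = max (1 / (l + 1) - 1 / 2) 0 + max (l / (l + 1) - 1 / 2) 0 := by
    simp only [hclass, h00, h11, ← hn, hnn]
    norm_num
  refine ⟨hc, hc.trans ?_⟩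
  have h1 : 1 / (l + 1) - 1 / 2 ≤ 0 := by
    rw [sub_nonpos, div_le_div_iff₀ hl0 (by norm_num)]; linarith
  have h2 : 0 ≤ l / (l + 1) - 1 / 2 := by
    rw [sub_nonneg, le_div_iff₀ hl0]; linarith
  rw [max_eq_right h1, max_eq_left h2, zero_add]
end

section
/- Class homophily is not tolerant to empty classes: let C ≥ 2 and consider class data on C classes (symmetric nonnegative class adjacency matrix c with row sums a k, class sizes n k > 0, total n) with class homophily h_class^{(C)} = (1/(C−1))·Σ_{k<C} max(c k k / a k − n k / n, 0). Extend the data to C + 1 classes by appending a dummy class with no nodes and no edges (all new matrix entries 0 and n_{C+1} = 0), and let h_class^{(C+1)} denote the class homophily of the extended data, with the convention 0/0 = 0. Then h_class^{(C+1)} = ((C − 1)/C)·h_class^{(C)}; in particular, whenever h_class^{(C)} ≠ 0, introducing the dummy class changes the value of class homophily. -/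
/-! The dummy class contributes the term `max (0/0 - 0/n) 0 = 0` and changes no row sum and
not the total size, so the sum in `h_class` is unchanged and only the normalisation moves from
`1/(C - 1)` to `1/C`. -/

noncomputable def classHomophilySum {ι : Type*} [Fintype ι] (c : ι → ι → ℝ) (n : ι → ℝ) :
    ℝ :=
  ∑ k, max (c k k / ∑ j, c k j - n k / ∑ i, n i) 0

theorem classHomophilySum_of_last_empty {C : ℕ} (c : Fin (C + 1) → Fin (C + 1) → ℝ)
    (n : Fin (C + 1) → ℝ) (hc : ∀ i, c i (Fin.last C) = 0) (hn : n (Fin.last C) = 0) :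
    classHomophilySum c n =
      classHomophilySum (fun i j : Fin C => c i.castSucc j.castSucc)
        (fun i : Fin C => n i.castSucc) := by
  simp only [classHomophilySum, Fin.sum_univ_castSucc, hc, hn, add_zero, zero_div, sub_zero,
    max_self]

theorem one_div_mul_eq_div_mul_one_div_sub_one {x : ℝ} (hx : x ≠ 1) (s : ℝ) :
    1 / x * s = (x - 1) / x * (1 / (x - 1) * s) := by
  rw [← mul_assoc, div_mul_div_comm, mul_one, mul_comm x, ← div_div,
    div_self (sub_ne_zero.mpr hx)]

theorem sub_one_div_mul_ne_self {x h : ℝ} (hh : h ≠ 0) : (x - 1) / x * h ≠ h := by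
  rw [Ne, mul_eq_right₀ hh]
  rcases eq_or_ne x 0 with rfl | hx
  · norm_num
  · rw [div_eq_one_iff_eq hx]
    exact (sub_one_lt x).ne

theorem class_homophily_not_empty_class_tolerant_general
    (C : ℕ) (hC : 2 ≤ C) (c : Fin C → Fin C → ℝ) (nsize : Fin C → ℝ) :
    let c' : Fin (C + 1) → Fin (C + 1) → ℝ := fun i j =>
      if h : (i : ℕ) < C ∧ (j : ℕ) < C then c ⟨i.1, h.1⟩ ⟨j.1, h.2⟩ else 0
    let nsize' : Fin (C + 1) → ℝ := fun i =>
      if h : (i : ℕ) < C then nsize ⟨i.1, h⟩ else 0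
    let hclassC : ℝ := (1 / ((C : ℝ) - 1)) *
      ∑ k, max (c k k / (∑ j, c k j) - nsize k / (∑ i, nsize i)) 0
    let hclassC1 : ℝ := (1 / (((C + 1 : ℕ) : ℝ) - 1)) *
      ∑ k, max (c' k k / (∑ j, c' k j) - nsize' k / (∑ i, nsize' i)) 0
    hclassC1 = (((C : ℝ) - 1) / (C : ℝ)) * hclassC ∧
    (hclassC ≠ 0 → hclassC1 ≠ hclassC) := by
  intro c' nsize' hclassC hclassC1
  have hsum : classHomophilySum c' nsize' = classHomophilySum c nsize := by
    rw [classHomophilySum_of_last_empty c' nsize' (by simp [c']) (by simp [nsize'])]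
    simp [c', nsize']
  have hC1 : (C : ℝ) ≠ 1 := Nat.cast_ne_one.mpr (by omega)
  have key : hclassC1 = ((C : ℝ) - 1) / C * hclassC := by
    change 1 / (((C + 1 : ℕ) : ℝ) - 1) * classHomophilySum c' nsize' = _
    rw [hsum, Nat.cast_succ, add_sub_cancel_right]
    exact one_div_mul_eq_div_mul_one_div_sub_one hC1 _
  exact ⟨key, fun hne => key ▸ sub_one_div_mul_ne_self hne⟩

/-- **Class homophily is not tolerant to empty classes.**
Appending a dummy class with no nodes and no edges to class data on `C ≥ 2`
classes rescales class homophily by `(C − 1)/C` (using the convention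
`0/0 = 0`, which holds for Lean's real division); in particular, whenever
`h_class ≠ 0`, introducing the dummy class changes its value. -/
theorem class_homophily_not_empty_class_tolerant
    (C : ℕ) (hC : 2 ≤ C) (c : Fin C → Fin C → ℝ) (nsize : Fin C → ℝ)
    (hsymm : ∀ i j, c i j = c j i)
    (hnonneg : ∀ i j, 0 ≤ c i j)
    (hn : ∀ k, 0 < nsize k) :
    let c' : Fin (C + 1) → Fin (C + 1) → ℝ := fun i j =>
      if h : (i : ℕ) < C ∧ (j : ℕ) < C then c ⟨i.1, h.1⟩ ⟨j.1, h.2⟩ else 0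
    let nsize' : Fin (C + 1) → ℝ := fun i =>
      if h : (i : ℕ) < C then nsize ⟨i.1, h⟩ else 0
    let hclassC : ℝ := (1 / ((C : ℝ) - 1)) *
      ∑ k, max (c k k / (∑ j, c k j) - nsize k / (∑ i, nsize i)) 0
    let hclassC1 : ℝ := (1 / (((C + 1 : ℕ) : ℝ) - 1)) *
      ∑ k, max (c' k k / (∑ j, c' k j) - nsize' k / (∑ i, nsize' i)) 0
    hclassC1 = (((C : ℝ) - 1) / (C : ℝ)) * hclassC ∧
    (hclassC ≠ 0 → hclassC1 ≠ hclassC) :=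
  class_homophily_not_empty_class_tolerant_general C hC c nsize
end
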